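/- Let Q be a group with a finite presentation Q = ⟨q₁,…,q_m ∣ r₁,…,r_s⟩, i.e. Q is the quotient of the free group F on q₁,…,q_m by the normal closure of the words r₁,…,r_s. Let 1 → ℤ → Γ → Q → 1 be a central extension, i.e. an exact sequence of groups in which the image of ℤ is contained in the center of Γ. Then there exist integers i₁,…,i_s such that Γ is isomorphic to the presented group on generators t, q₁,…,q_m with relators [t,q_k] for 1 ≤ k ≤ m and r_j·t^{i_j} for 1 ≤ j ≤ s (each r_j regarded as a word in the generators q_k), via an isomorphism carrying t to the image in Γ of a generator of the central ℤ and inducing the identity on the quotient Q. -/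

import Mathlib

open scoped commutatorElement

/-- The relators of the presentation `⟨t, q₁, …, q_m ∣ [t,q_k] (1 ≤ k ≤ m),
r_j·t^{i_j} (1 ≤ j ≤ s)⟩`, where the generator `t` is encoded as `none` and the
generator `q_k` as `some k`, and each word `r_j` in the free group on `q₁, …, q_m`
is regarded as a word in the generators `q_k` via `FreeGroup.map some`. -/
def centralExtRels {m s : ℕ} (r : Fin s → FreeGroup (Fin m)) (i : Fin s → ℤ) :
    Set (FreeGroup (Option (Fin m))) :=
  (Set.range fun k : Fin m =>
      ⁅FreeGroup.of (none : Option (Fin m)), FreeGroup.of (some k)⁆) ∪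
  (Set.range fun j : Fin s =>
      FreeGroup.map some (r j) * FreeGroup.of (none : Option (Fin m)) ^ (i j))

/-!
Lift each generator `q_k` to some `g_k ∈ Γ`. Evaluated at these lifts, each relator `r_j` lands
in `ker π = ι ℤ`, say at `τ ^ (-i_j)` with `τ = ι 1`; so `t ↦ τ`, `q_k ↦ g_k` defines a map `ψ`
from the presented group `G` to `Γ`. It is onto because `π ∘ ψ` is onto and `ker π = ⟨τ⟩`.
It is injective because `t` is central in `G` and `G ⧸ ⟨t⟩` satisfies the relations of `Q`,
so `ker (π ∘ ψ) ≤ ⟨t⟩`, on which `ψ` is injective since `ι` is.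
-/

theorem Subgroup.normal_of_le_center {G : Type*} [Group G] {H : Subgroup G}
    (hH : H ≤ Subgroup.center G) : H.Normal where
  conj_mem n hn g := by
    rwa [Subgroup.mem_center_iff.mp (hH hn) g, mul_inv_cancel_right]

theorem MonoidHom.injective_of_ker_comp_le_zpowers {G Γ Q : Type*} [Group G] [Group Γ] [Group Q]
    (ψ : G →* Γ) (π : Γ →* Q) {t : G} (hker : (π.comp ψ).ker ≤ Subgroup.zpowers t)
    (ht : Function.Injective fun n : ℤ => ψ t ^ n) : Function.Injective ψ := by
  rw [injective_iff_map_eq_one]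
  intro x hx
  obtain ⟨n, rfl⟩ := Subgroup.mem_zpowers_iff.mp <| hker (show π (ψ x) = 1 by rw [hx, map_one])
  have hn : n = 0 := ht (by simpa only [map_zpow, zpow_zero] using hx)
  rw [hn, zpow_zero]

theorem MonoidHom.surjective_of_surjective_comp_of_ker_le_range {G Γ Q : Type*}
    [Group G] [Group Γ] [Group Q]
    (ψ : G →* Γ) (π : Γ →* Q) (hπψ : Function.Surjective (π.comp ψ))
    (hker : π.ker ≤ ψ.range) : Function.Surjective ψ := by
  rw [← MonoidHom.range_eq_top, ← Subgroup.comap_top π, ← (π.comp ψ).range_eq_top.mpr hπψ,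
    MonoidHom.range_comp, Subgroup.comap_map_eq, sup_eq_left.mpr hker]

namespace PresentedGroup

variable {α : Type*} {rels : Set (FreeGroup α)}

theorem surjective_of_forall_of_mem_range {H : Type*} [Group H] (f : H →* PresentedGroup rels)
    (h : ∀ a, PresentedGroup.of a ∈ f.range) : Function.Surjective f := by
  rw [← MonoidHom.range_eq_top, eq_top_iff, ← closure_range_of, Subgroup.closure_le]
  rintro _ ⟨a, rfl⟩
  exact h a

theorem lift_mem_ker_of_mem_rels {Γ : Type*} [Group Γ] (π : Γ →* PresentedGroup rels)
    {g : α → Γ} (hg : ∀ a, π (g a) = PresentedGroup.of a) {w : FreeGroup α} (hw : w ∈ rels) :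
    FreeGroup.lift g w ∈ π.ker := by
  have hπg : π.comp (FreeGroup.lift g) = PresentedGroup.mk rels := by
    ext a; exact (congrArg π FreeGroup.lift_apply_of).trans (hg a)
  rw [MonoidHom.mem_ker, ← MonoidHom.comp_apply, hπg]
  exact one_of_mem hw

end PresentedGroup

namespace centralExtRels

variable {m s : ℕ} (r : Fin s → FreeGroup (Fin m)) (i : Fin s → ℤ)

local notation "t" => (PresentedGroup.of none : PresentedGroup (centralExtRels r i))

theorem commute_of_none (x : PresentedGroup (centralExtRels r i)) : Commute t x := by
  have hgen : ∀ o, PresentedGroup.of o ∈ Subgroup.centralizer {t} := by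
    rintro (_ | k)
    · exact Subgroup.mem_centralizer_singleton_iff.mpr rfl
    · have h := PresentedGroup.one_of_mem (rels := centralExtRels r i) (Or.inl ⟨k, rfl⟩)
      rw [map_commutatorElement, commutatorElement_eq_one_iff_commute] at h
      exact Subgroup.mem_centralizer_singleton_iff.mpr h.eq.symm
  exact (Subgroup.mem_centralizer_singleton_iff.mp (PresentedGroup.generated_by _ _ hgen x)).symm

theorem mk_map_some (j : Fin s) :
    PresentedGroup.mk (centralExtRels r i) (FreeGroup.map some (r j)) = t ^ (-i j) := by
  have h := PresentedGroup.one_of_mem (rels := centralExtRels r i) (Or.inr ⟨j, rfl⟩)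
  rw [map_mul, map_zpow] at h
  rw [zpow_neg]
  exact eq_inv_of_mul_eq_one_left h

theorem ker_le_zpowers_of_none
    (ρ : PresentedGroup (centralExtRels r i) →* PresentedGroup (Set.range r))
    (hnone : ρ t = 1) (hsome : ∀ k, ρ (PresentedGroup.of (some k)) = PresentedGroup.of k) :
    ρ.ker ≤ Subgroup.zpowers t := by
  have : (Subgroup.zpowers t).Normal := Subgroup.normal_of_le_center <| Subgroup.zpowers_le.mpr <|
    Subgroup.mem_center_iff.mpr fun x => (commute_of_none r i x).eq.symm
  let κ := QuotientGroup.mk' (Subgroup.zpowers t)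
  have hrels :
      ∀ w ∈ Set.range r, FreeGroup.lift (fun k => κ (PresentedGroup.of (some k))) w = 1 := by
    rintro _ ⟨j, rfl⟩
    have hlift : FreeGroup.lift (fun k => κ (PresentedGroup.of (some k))) =
        (κ.comp (PresentedGroup.mk _)).comp (FreeGroup.map some) := by
      ext; rfl
    rw [hlift, MonoidHom.comp_apply, MonoidHom.comp_apply, mk_map_some,
      QuotientGroup.mk'_apply, QuotientGroup.eq_one_iff]
    exact Subgroup.zpow_mem_zpowers t _
  have hκ : (PresentedGroup.toGroup hrels).comp ρ = κ := by
    refine PresentedGroup.ext ?_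
    rintro (_ | k)
    · rw [MonoidHom.comp_apply, hnone, map_one, eq_comm, QuotientGroup.mk'_apply,
        QuotientGroup.eq_one_iff]
      exact Subgroup.mem_zpowers t
    · rw [MonoidHom.comp_apply, hsome, PresentedGroup.toGroup.of]
  intro x hx
  rw [← QuotientGroup.ker_mk' (Subgroup.zpowers t)]
  change κ x = 1
  rw [← hκ, MonoidHom.comp_apply, hx, map_one]

theorem lift_eq_one_of_mem {Γ : Type*} [Group Γ] {τ : Γ} (hτ : τ ∈ Subgroup.center Γ)
    (g : Fin m → Γ) (hg : ∀ j, FreeGroup.lift g (r j) * τ ^ i j = 1) :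
    ∀ w ∈ centralExtRels r i, FreeGroup.lift (fun o => o.elim τ g) w = 1 := by
  rintro _ (⟨k, rfl⟩ | ⟨j, rfl⟩)
  · rw [map_commutatorElement, commutatorElement_eq_one_iff_commute, FreeGroup.lift_apply_of,
      FreeGroup.lift_apply_of]
    exact (Subgroup.mem_center_iff.mp hτ (g k)).symm
  · have hlift : (FreeGroup.lift fun o => o.elim τ g).comp (FreeGroup.map some) =
        FreeGroup.lift g := by
      ext; simp
    rw [map_mul, map_zpow, FreeGroup.lift_apply_of, ← MonoidHom.comp_apply, hlift]
    exact hg j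

end centralExtRels

/-- Let `Q = ⟨q₁,…,q_m ∣ r₁,…,r_s⟩` be a finitely presented group and let
`1 → ℤ → Γ → Q → 1` be a central extension.  Then there exist integers
`i₁,…,i_s` such that `Γ` is isomorphic to the presented group
`⟨t, q₁,…,q_m ∣ [t,q_k], r_j·t^{i_j}⟩`, via an isomorphism carrying `t` to the
image in `Γ` of a generator of the central `ℤ` and inducing the identity on `Q`
(i.e. sending each `q_k` to an element mapping to `q_k ∈ Q`). -/
theorem central_extension_presentation {m s : ℕ} (r : Fin s → FreeGroup (Fin m))
    (Γ : Type) [Group Γ]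
    (ι : Multiplicative ℤ →* Γ) (π : Γ →* PresentedGroup (Set.range r))
    (hι : Function.Injective ι) (hπ : Function.Surjective π)
    (hexact : π.ker = ι.range)
    (hcent : ∀ z : Multiplicative ℤ, ι z ∈ Subgroup.center Γ) :
    ∃ (i : Fin s → ℤ) (e : PresentedGroup (centralExtRels r i) ≃* Γ),
      (∃ u : Multiplicative ℤ,
        (u = Multiplicative.ofAdd 1 ∨ u = Multiplicative.ofAdd (-1)) ∧
        e (PresentedGroup.of (rels := centralExtRels r i) none) = ι u) ∧
      ∀ k : Fin m,
        π (e (PresentedGroup.of (rels := centralExtRels r i) (some k))) =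
          PresentedGroup.of (rels := Set.range r) k := by
  choose g hg using fun k => hπ (PresentedGroup.of (rels := Set.range r) k)
  choose z hz using fun j =>
    hexact ▸ PresentedGroup.lift_mem_ker_of_mem_rels π hg (Set.mem_range_self j)
  set τ := ι (Multiplicative.ofAdd 1)
  have hιτ : ∀ u, ι u = τ ^ u.toAdd := ι.apply_mint
  have hrels := centralExtRels.lift_eq_one_of_mem r (fun j => -(z j).toAdd) (hcent _) g
    fun j => by rw [← hz, hιτ, ← zpow_add, add_neg_cancel, zpow_zero]
  set ψ := PresentedGroup.toGroup hrels
  have hψt : ψ (PresentedGroup.of none) = τ := PresentedGroup.toGroup.of hrels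
  have hψq : ∀ k, π (ψ (PresentedGroup.of (some k))) = PresentedGroup.of k :=
    fun k => (congrArg π (PresentedGroup.toGroup.of hrels)).trans (hg k)
  have hπψt : π (ψ (PresentedGroup.of none)) = 1 := hψt ▸ show τ ∈ π.ker from hexact ▸ ⟨_, rfl⟩
  have hinj : Function.Injective ψ := by
    refine ψ.injective_of_ker_comp_le_zpowers π
      (centralExtRels.ker_le_zpowers_of_none r _ (π.comp ψ) hπψt hψq) ?_
    have hzpow : (fun n : ℤ => ψ (PresentedGroup.of none) ^ n) = ι ∘ Multiplicative.ofAdd := by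
      funext n
      rw [hψt, Function.comp_apply, hιτ, toAdd_ofAdd]
    exact hzpow ▸ hι.comp Multiplicative.ofAdd.injective
  have hsurj : Function.Surjective ψ := by
    refine ψ.surjective_of_surjective_comp_of_ker_le_range π
      (PresentedGroup.surjective_of_forall_of_mem_range _ fun k => ⟨_, hψq k⟩) ?_
    rw [hexact]
    rintro _ ⟨u, rfl⟩
    exact ⟨PresentedGroup.of none ^ u.toAdd, by rw [map_zpow, hψt, hιτ]⟩
  exact ⟨_, MulEquiv.ofBijective ψ ⟨hinj, hsurj⟩, ⟨_, Or.inl rfl, hψt⟩, hψq⟩
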